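/- arXiv:math/0011040 — 5 statements merged into one kernel-verified Lean document; each statement's English description precedes it below -/
import Mathlib

section
/- The function F : (Z/2)^n × (Z/2)^n → k defined by F(x,y) = (-1)^{Σ_{j<i} x_i y_j} · Π_i q_i^{x_i y_i}, where q_1,...,q_n are nonzero elements of a field k of characteristic ≠ 2, is a 2-cocycle on the group (Z/2)^n, i.e. F(x,y)F(x+y,z) = F(y,z)F(x,y+z) for all x,y,z, and F(0,x) = F(x,0) = 1. -/
/-!
`F` is a pointwise product of simpler cocycles. The sign factor is `(-1)^B(x,y)` for a
bilinear form `B` over `ℤ/2`, and every bilinear form satisfies the additive cocycle identity. The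
factor `q_i^{x_i y_i}` is pulled back along the `i`-th coordinate from the cocycle
`(a, b) ↦ c^{a b}` on `ℤ/2`, whose identity `ab + (a+b)c = bc + a(b+c)` (with `a + b` reduced
mod 2 before multiplying) is checked on the eight cases.
-/

/-- The cochain `F(x,y) = (-1)^{Σ_{j<i} x_i y_j} · Π_i q_i^{x_i y_i}` on `(ℤ/2)^n`. -/
noncomputable def Fc {k : Type*} [Field k] {n : ℕ} (q : Fin n → k)
    (x y : Fin n → ZMod 2) : k :=
  (-1 : k) ^ (∑ i, ∑ j ∈ Finset.Iio i, (x i).val * (y j).val) *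
    ∏ i, q i ^ ((x i).val * (y i).val)

open Finset

def IsTwoCocycle {G M : Type*} [Add G] [Mul M] (F : G → G → M) : Prop :=
  ∀ x y z, F x y * F (x + y) z = F y z * F x (y + z)

namespace IsTwoCocycle

variable {G M : Type*} [AddCommGroup G] [CommMonoid M]

theorem mul {F F' : G → G → M} (hF : IsTwoCocycle F) (hF' : IsTwoCocycle F') :
    IsTwoCocycle (fun x y => F x y * F' x y) := by
  intro x y z
  calc F x y * F' x y * (F (x + y) z * F' (x + y) z)
      = (F x y * F (x + y) z) * (F' x y * F' (x + y) z) := by ac_rfl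
    _ = (F y z * F x (y + z)) * (F' y z * F' x (y + z)) := by rw [hF, hF']
    _ = F y z * F' y z * (F x (y + z) * F' x (y + z)) := by ac_rfl

theorem prod {ι : Type*} (s : Finset ι) {F : ι → G → G → M}
    (hF : ∀ i ∈ s, IsTwoCocycle (F i)) : IsTwoCocycle (fun x y => ∏ i ∈ s, F i x y) := by
  intro x y z
  simp only [← prod_mul_distrib]
  exact prod_congr rfl fun i hi => hF i hi x y z

theorem comp {H : Type*} [AddCommGroup H] {F : G → G → M} (hF : IsTwoCocycle F) (f : H →+ G) :
    IsTwoCocycle (fun x y => F (f x) (f y)) := by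
  intro x y z
  simpa only [map_add] using hF (f x) (f y) (f z)

end IsTwoCocycle

theorem neg_one_pow_eq_of_natCast_zmod_two_eq {R : Type*} [Monoid R] [HasDistribNeg R] {m n : ℕ}
    (h : (m : ZMod 2) = n) : (-1 : R) ^ m = (-1) ^ n :=
  neg_one_pow_congr <| by rw [← ZMod.natCast_eq_zero_iff_even, ← ZMod.natCast_eq_zero_iff_even, h]

theorem isTwoCocycle_neg_one_pow {G R : Type*} [Add G] [Monoid R] [HasDistribNeg R]
    {e : G → G → ℕ}
    (he : ∀ x y z, (e x y + e (x + y) z : ZMod 2) = e y z + e x (y + z)) :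
    IsTwoCocycle (fun x y => (-1 : R) ^ e x y) := by
  intro x y z
  simp only [← pow_add]
  exact neg_one_pow_eq_of_natCast_zmod_two_eq (by push_cast; exact he x y z)

theorem isTwoCocycle_pow_val_mul_val {M : Type*} [Monoid M] (c : M) :
    IsTwoCocycle (fun a b : ZMod 2 => c ^ (a.val * b.val)) := by
  have key : ∀ a b d : ZMod 2,
      a.val * b.val + (a + b).val * d.val = b.val * d.val + a.val * (b + d).val := by
    decide
  intro a b d
  simp only [← pow_add, key]

theorem natCast_sum_lowerTriangle_val {n : ℕ} (x y : Fin n → ZMod 2) :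
    ((∑ i, ∑ j ∈ Iio i, (x i).val * (y j).val : ℕ) : ZMod 2) = ∑ i, ∑ j ∈ Iio i, x i * y j := by
  push_cast
  simp only [ZMod.natCast_val, ZMod.cast_id', id_eq]

theorem isTwoCocycle_Fc {k : Type*} [Field k] {n : ℕ} (q : Fin n → k) : IsTwoCocycle (Fc q) := by
  have sign : IsTwoCocycle fun x y : Fin n → ZMod 2 =>
      (-1 : k) ^ (∑ i, ∑ j ∈ Iio i, (x i).val * (y j).val) := by
    refine isTwoCocycle_neg_one_pow fun x y z => ?_
    simp only [natCast_sum_lowerTriangle_val, Pi.add_apply, add_mul, mul_add, sum_add_distrib]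
    abel
  have diagonal : IsTwoCocycle fun x y : Fin n → ZMod 2 => ∏ i, q i ^ ((x i).val * (y i).val) :=
    IsTwoCocycle.prod _ fun i _ =>
      (isTwoCocycle_pow_val_mul_val (q i)).comp (Pi.evalAddMonoidHom (fun _ => ZMod 2) i)
  exact sign.mul diagonal

theorem Fc_is_two_cocycle_general {k : Type*} [Field k]
    {n : ℕ} (q : Fin n → k) (hq : ∀ i, q i ≠ 0) :
    (∀ x y z : Fin n → ZMod 2,
        Fc q x y * Fc q (x + y) z = Fc q y z * Fc q x (y + z)) ∧
    (∀ x y : Fin n → ZMod 2, Fc q x y ≠ 0) ∧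
    (∀ x : Fin n → ZMod 2, Fc q 0 x = 1 ∧ Fc q x 0 = 1) := by
  refine ⟨isTwoCocycle_Fc q, fun x y => ?_, fun x => by simp [Fc]⟩
  exact mul_ne_zero (pow_ne_zero _ (neg_ne_zero.mpr one_ne_zero))
    (prod_ne_zero_iff.mpr fun i _ => pow_ne_zero _ (hq i))

/-- `F` is a normalized 2-cocycle on `(ℤ/2)^n` with values in `k^×`. -/
theorem Fc_is_two_cocycle {k : Type*} [Field k] (hk : (2 : k) ≠ 0)
    {n : ℕ} (q : Fin n → k) (hq : ∀ i, q i ≠ 0) :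
    (∀ x y z : Fin n → ZMod 2,
        Fc q x y * Fc q (x + y) z = Fc q y z * Fc q x (y + z)) ∧
    (∀ x y : Fin n → ZMod 2, Fc q x y ≠ 0) ∧
    (∀ x : Fin n → ZMod 2, Fc q 0 x = 1 ∧ Fc q x 0 = 1) :=
  Fc_is_two_cocycle_general q hq
end

section
/- The function θ : (Z/2)^n → {±1} defined by θ(x) = (-1)^{ρ(x)(ρ(x)-1)/2}, where ρ(x) = Σ_i x_i ∈ Z, satisfies θ(x)θ(y)/θ(x+y) = (-1)^{ρ(x)ρ(y) + x·y} for all x, y; i.e. the cotriangular structure R(x,y) = (-1)^{ρ(x)ρ(y)+x·y} is the group coboundary of θ. -/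
/-- `ρ(x) = Σ_i x_i` as a natural number. -/
def rho {n : ℕ} (x : Fin n → ZMod 2) : ℕ := ∑ i, (x i).val

/-- `x·y = Σ_i x_i y_i`. -/
def dotp {n : ℕ} (x y : Fin n → ZMod 2) : ℕ := ∑ i, (x i).val * (y i).val

/-- `θ(x) = (-1)^{ρ(x)(ρ(x)-1)/2}`. -/
def theta (k : Type*) [Field k] {n : ℕ} (x : Fin n → ZMod 2) : k :=
  (-1 : k) ^ (rho x * (rho x - 1) / 2)

/-!
The exponent of `θ(x)` is `C(ρ(x), 2)`. Lifting coordinatewise, `ρ(x+y) + 2 x·y = ρ(x) + ρ(y)`,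
and `C(-, 2)` is additive up to the cross term: `C(a+b, 2) = C(a, 2) + C(b, 2) + ab`.
Expanding `C(ρ(x) + ρ(y), 2)` once directly and once as `C(ρ(x+y) + 2 x·y, 2)` shows that
`C(ρ(x), 2) + C(ρ(y), 2)` and `ρ(x)ρ(y) + x·y + C(ρ(x+y), 2)` have the same parity.
-/

theorem Nat.choose_two_add (a b : ℕ) : (a + b).choose 2 = a.choose 2 + b.choose 2 + a * b := by
  induction b with
  | zero => simp
  | succ b ih =>
    rw [← add_assoc, Nat.choose_succ_succ', ih, Nat.choose_succ_succ', Nat.choose_one_right,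
      Nat.choose_one_right]
    ring

theorem Nat.even_choose_two_add_choose_two_iff {a b c d : ℕ} (h : c + 2 * d = a + b) :
    Even (a.choose 2 + b.choose 2) ↔ Even (a * b + d + c.choose 2) := by
  have hab := Nat.choose_two_add a b
  have hcd := Nat.choose_two_add c (d + d)
  have hdd := Nat.choose_two_add d d
  rw [← two_mul] at hcd hdd
  rw [h] at hcd
  have hsum : a.choose 2 + b.choose 2 + (a * b + d + c.choose 2) =
      2 * (c.choose 2 + d.choose 2 + c * d) + d * (d + 1) := by linarith
  apply Nat.even_add.mp
  rw [hsum]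
  exact (even_two_mul _).add (Nat.even_mul_succ_self d)

theorem ZMod.val_add_add_two_mul_val_mul (a b : ZMod 2) :
    (a + b).val + 2 * (a.val * b.val) = a.val + b.val := by
  decide +revert

theorem rho_add_add_two_mul_dotp {n : ℕ} (x y : Fin n → ZMod 2) :
    rho (x + y) + 2 * dotp x y = rho x + rho y := by
  simp only [rho, dotp, Finset.mul_sum, ← Finset.sum_add_distrib, Pi.add_apply,
    ZMod.val_add_add_two_mul_val_mul]

theorem theta_eq_neg_one_pow_choose_two (k : Type*) [Field k] {n : ℕ} (x : Fin n → ZMod 2) :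
    theta k x = (-1) ^ (rho x).choose 2 := by
  rw [theta, Nat.choose_two_right]

theorem theta_coboundary_general {k : Type*} [Field k] {n : ℕ} :
    (∀ x y : Fin n → ZMod 2,
      theta k x * theta k y =
        ((-1 : k) ^ (rho x * rho y + dotp x y)) * theta k (x + y)) ∧
    (∀ x : Fin n → ZMod 2, theta k x = 1 ∨ theta k x = -1) := by
  refine ⟨fun x y => ?_, fun x => ?_⟩
  · simp only [theta_eq_neg_one_pow_choose_two, ← pow_add]
    exact neg_one_pow_congr
      (Nat.even_choose_two_add_choose_two_iff (rho_add_add_two_mul_dotp x y))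
  · exact theta_eq_neg_one_pow_choose_two k x ▸ neg_one_pow_eq_or k _

/-- `θ(x)θ(y)/θ(x+y) = (-1)^{ρ(x)ρ(y) + x·y}`, i.e. the cotriangular
structure `R(x,y) = (-1)^{ρ(x)ρ(y)+x·y}` is the coboundary of `θ`.  Moreover `θ` takes
values in `{1, -1}`. -/
theorem theta_coboundary {k : Type*} [Field k] (hk : (2 : k) ≠ 0) {n : ℕ} :
    (∀ x y : Fin n → ZMod 2,
      theta k x * theta k y =
        ((-1 : k) ^ (rho x * rho y + dotp x y)) * theta k (x + y)) ∧
    (∀ x : Fin n → ZMod 2, theta k x = 1 ∨ theta k x = -1) :=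
  theta_coboundary_general
end

section
/- Let A be an algebra with involutive automorphism σ and let q ∈ k^×. Define the Clifford process algebra Ā = A ⊕ Av with product (a+bv)(c+dv) = (ac + q b σ(d)) + (ad + b σ(c))v, and let σ̄(a+bv) = σ(a) - σ(b)v. Then σ̄ is an involutive automorphism of Ā, and Ā is associative if and only if A is associative. -/
/-- The Clifford-process product on `Ā = A ⊕ Av`:
`(a+bv)(c+dv) = (ac + q·bσ(d)) + (ad + bσ(c))v`. -/
def cpMul {k A : Type*} [Field k] [NonAssocRing A] [Module k A]
    [SMulCommClass k A A] [IsScalarTower k A A]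
    (q : k) (σ : A → A) (p r : A × A) : A × A :=
  (p.1 * r.1 + q • (p.2 * σ r.2), p.1 * r.2 + p.2 * σ r.1)

/-- The map `σ̄(a + bv) = σ(a) - σ(b)v` on `Ā`. -/
def cpSigma {A : Type*} [NonAssocRing A] (σ : A → A) (p : A × A) : A × A :=
  (σ p.1, -σ p.2)

/-- if `σ` is an involutive automorphism of a (possibly nonassociative)
unital `k`-algebra `A` and `q ∈ k^×`, then `σ̄(a+bv) = σ(a) - σ(b)v` is an involutive
automorphism of the Clifford-process algebra `Ā = A ⊕ Av`, and `Ā` is associative if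
and only if `A` is associative. -/
theorem clifford_process_sigma_bar_and_associativity
    {k A : Type*} [Field k] (hk : (2 : k) ≠ 0) [NonAssocRing A] [Module k A]
    [SMulCommClass k A A] [IsScalarTower k A A]
    (q : k) (hq : q ≠ 0) (σ : A → A)
    (hadd : ∀ a b : A, σ (a + b) = σ a + σ b)
    (hsmul : ∀ (c : k) (a : A), σ (c • a) = c • σ a)
    (hmul : ∀ a b : A, σ (a * b) = σ a * σ b)
    (hone : σ 1 = 1)
    (hinv : ∀ a : A, σ (σ a) = a) :
    (∀ p r : A × A, cpSigma σ (cpMul q σ p r) = cpMul q σ (cpSigma σ p) (cpSigma σ r)) ∧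
    (∀ p r : A × A, cpSigma σ (p + r) = cpSigma σ p + cpSigma σ r) ∧
    (cpSigma σ ((1 : A), (0 : A)) = ((1 : A), (0 : A))) ∧
    (∀ p : A × A, cpSigma σ (cpSigma σ p) = p) ∧
    ((∀ a b c : A, a * b * c = a * (b * c)) ↔
      (∀ p r s : A × A, cpMul q σ (cpMul q σ p r) s = cpMul q σ p (cpMul q σ r s)))  := by
  have hzero : σ 0 = 0 := by
    have h0 := hadd 0 0
    simpa using h0.symm
  have hneg : ∀ a : A, σ (-a) = -σ a := by
    intro a
    have h0 := hadd a (-a)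
    rw [add_neg_cancel, hzero] at h0
    exact (neg_eq_of_add_eq_zero_right h0.symm).symm
  refine ⟨?_, ?_, ?_, ?_, ?_, ?_⟩
  · intro p r
    simp [cpMul, cpSigma, hadd, hsmul, hmul, hinv, hneg, mul_neg, neg_mul,
      neg_add, smul_neg, neg_neg, add_comm]
  · intro p r
    simp [cpSigma, hadd, neg_add, add_comm]
  · simp [cpSigma, hone, hzero]
  · intro p
    simp [cpSigma, hinv, hneg]
  · intro h p r s
    ext <;>
    · simp only [cpMul, mul_add, add_mul, smul_add, smul_mul_assoc,
        mul_smul_comm, hmul, hadd, hsmul, hinv, h]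
      abel
  · intro h a b c
    have h0 := h (a, 0) (b, 0) (c, 0)
    simp [cpMul, hzero, Prod.ext_iff] at h0
    exact h0
end

section
/- Suppose √(-1) ∈ k. Then there is an algebra isomorphism C(V⊕V, q⊕q) ≅ End_k(C(V,q)) given by letting e_x ⊗ e_y ∈ C(V,q) ⊗̂ C(V,q) ≅ C(V⊕V, q⊕q) act on e_z ∈ C(V,q) by (e_x ⊗ e_y)·e_z = i^{ρ(y)} (-1)^{y·z} e_x e_y e_z (product in C(V,q)); in particular this action is faithful and irreducible, realizing C(V,q) as the spinor representation of C(V⊕V, q⊕q). -/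
open CliffordAlgebra

/-- The diagonal quadratic form with weights `q_1, …, q_n`. -/
noncomputable def QF {k : Type*} [Field k] {n : ℕ} (q : Fin n → k) :
    QuadraticForm k (Fin n → k) :=
  QuadraticMap.weightedSumSquares k q

/-- The quadratic form `q ⊕ q` on `V ⊕ V`, modelled on `(Fin n ⊕ Fin n) → k`. -/
noncomputable def QF2 {k : Type*} [Field k] {n : ℕ} (q : Fin n → k) :
    QuadraticForm k ((Fin n ⊕ Fin n) → k) :=
  QuadraticMap.weightedSumSquares k (Sum.elim q q)

/-- The canonical basis element `e_x = e_1^{x_1} ⋯ e_n^{x_n}` of `C(V,q)`. -/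
noncomputable def eB {k : Type*} [Field k] {n : ℕ} (q : Fin n → k) (x : Fin n → ZMod 2) :
    CliffordAlgebra (QF q) :=
  ((List.finRange n).map fun i => ι (QF q) (Pi.single i 1) ^ (x i).val).prod

/-- The canonical basis element `e_x ⊗ e_y` of `C(V ⊕ V, q ⊕ q)`. -/
noncomputable def eB2 {k : Type*} [Field k] {n : ℕ} (q : Fin n → k)
    (x y : Fin n → ZMod 2) : CliffordAlgebra (QF2 q) :=
  ((List.finRange n).map fun i => ι (QF2 q) (Pi.single (Sum.inl i) 1) ^ (x i).val).prod *
    ((List.finRange n).map fun i => ι (QF2 q) (Pi.single (Sum.inr i) 1) ^ (y i).val).prod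

/-! `C(V ⊕ V)` acts on `C(V)` by `(v, w) · c = v c + i α(c) w`, with `α` the grade involution:
the two summands anticommute and square to `q(v)` and `q(w)`, so the universal property of the
Clifford algebra applies. The monomials `e_x` span `C(V)`, which has dimension `2ⁿ` (it is
isomorphic to the exterior algebra as a vector space), so they form a basis; and
`e_x e_y = d(x, y) e_{x+y}` with `d(x, y) ≠ 0` because every `q_j ≠ 0`. Hence `e_x ⊗ e_y` acts by
`e_z ↦ i^{ρ(y)} (-1)^{y·z} d(x, y) d(x + y, z) e_{x+y+z}`. In a vanishing linear combination of
these operators, applied to `e_z`, the coefficient of `e_{s+z}` involves only the pairs with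
`x + y = s`, and gives a relation between the characters `z ↦ (-1)^{y·z}` of `(ℤ/2)ⁿ`, which are
linearly independent since `2 ≠ 0`. So the `4ⁿ` operators are linearly independent in
`End(C(V))`, and the action is bijective because `dim C(V ⊕ V) = 4ⁿ = dim End(C(V))`.
Irreducibility is that of `End(W)` acting on `W`. -/

lemma neg_one_pow_mul_self {R : Type*} [Monoid R] [HasDistribNeg R] (m : ℕ) :
    (-1 : R) ^ m * (-1) ^ m = 1 := by
  rw [← pow_add, ← two_mul, pow_mul, neg_one_sq, one_pow]

lemma ZMod.val_two_eq_zero_or_one (c : ZMod 2) : c.val = 0 ∨ c.val = 1 := by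
  have := c.val_lt; omega

lemma Pi.zmod_two_add_self {J : Type*} (y : J → ZMod 2) : y + y = 0 := by
  funext j; exact CharTwo.add_self_eq_zero (y j)

section Words

variable {k A J : Type*} [CommRing k] [Ring A] [Algebra k A]

def word (g : J → A) (x : J → ZMod 2) (L : List J) : A :=
  (L.map fun j => g j ^ (x j).val).prod

variable {g : J → A}

@[simp] lemma word_nil (x : J → ZMod 2) : word g x [] = 1 := rfl

@[simp] lemma word_cons (x : J → ZMod 2) (a : J) (L : List J) :
    word g x (a :: L) = g a ^ (x a).val * word g x L := by
  simp [word]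

lemma word_congr {x x' : J → ZMod 2} {L : List J} (h : ∀ j ∈ L, x j = x' j) :
    word g x L = word g x' L := by
  unfold word
  rw [List.map_congr_left fun j hj => by rw [h j hj]]

@[simp] lemma word_zero (L : List J) : word g 0 L = 1 := by
  induction L with
  | nil => rfl
  | cons a L ih => simp [ih]

lemma map_word (f : A →ₐ[k] A) (hf : ∀ j, f (g j) = -g j) (x : J → ZMod 2) (L : List J) :
    f (word g x L) = (-1 : k) ^ (L.map fun b => (x b).val).sum • word g x L := by
  induction L with
  | nil => simp
  | cons a L ih =>
    rw [word_cons, map_mul, ih, map_pow, hf, ← neg_one_smul k (g a), smul_pow, smul_mul_smul_comm,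
      ← pow_add, List.map_cons, List.sum_cons]

lemma pow_val_mul_pow_val {w : k} {a : A} (ha : a * a = algebraMap k A w) (c d : ZMod 2) :
    ∃ u : k, (IsUnit w → IsUnit u) ∧ a ^ c.val * a ^ d.val = u • a ^ (c + d).val := by
  obtain rfl | rfl : c = 0 ∨ c = 1 := by decide +revert
  · exact ⟨1, fun _ => isUnit_one, by simp⟩
  obtain rfl | rfl : d = 0 ∨ d = 1 := by decide +revert
  · exact ⟨1, fun _ => isUnit_one, by simp⟩
  · exact ⟨w, id, by simp [ZMod.val_one, show (1 + 1 : ZMod 2) = 0 from rfl, ha,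
      Algebra.algebraMap_eq_smul_one]⟩

variable [DecidableEq J]

lemma word_single {a : J} {L : List J} (hL : L.Nodup) (ha : a ∈ L) :
    word g (Pi.single a 1) L = g a := by
  induction L with
  | nil => simp at ha
  | cons b L ih =>
    obtain ⟨hbL, hL⟩ := List.nodup_cons.mp hL
    rcases List.mem_cons.mp ha with rfl | haL
    · have hrest : word g (Pi.single a 1) L = word g 0 L :=
        word_congr fun j hj => Pi.single_eq_of_ne (by rintro rfl; exact hbL hj) _
      simp [hrest, ZMod.val_one]
    · rw [word_cons, ih hL haL, Pi.single_eq_of_ne (by rintro rfl; exact hbL haL)]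
      simp

section Anticommuting

variable (hg : Pairwise fun j l => g j * g l = -(g l * g j))
include hg

lemma pow_val_mul_comm (c : ZMod 2) (b a : J) :
    g b ^ c.val * g a =
      (-1 : k) ^ (c.val + if b = a then c.val else 0) • (g a * g b ^ c.val) := by
  rcases eq_or_ne b a with rfl | hba
  · simp [← two_mul, pow_mul, pow_mul_comm']
  · rcases ZMod.val_two_eq_zero_or_one c with h | h <;> simp [h, hba, hg hba]

lemma word_mul_comm (x : J → ZMod 2) (L : List J) (a : J) :
    word g x L * g a =
      (-1 : k) ^ ((L.map fun b => (x b).val).sum + L.count a * (x a).val) •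
        (g a * word g x L) := by
  -- `g a ^ x a` commutes with `g a`; counting it twice keeps the exponent free of subtraction
  induction L with
  | nil => simp
  | cons b L ih =>
    rw [word_cons, mul_assoc, ih, mul_smul_comm, ← mul_assoc, pow_val_mul_comm (k := k) hg,
      smul_mul_assoc, smul_smul, ← pow_add, mul_assoc]
    congr 2
    rcases eq_or_ne b a with rfl | hba
    · simp only [List.map_cons, List.sum_cons, List.count_cons_self, if_pos]
      ring
    · simp only [List.map_cons, List.sum_cons, List.count_cons_of_ne hba, if_neg hba]
      ring

lemma word_mul_pow_comm_of_notMem (x : J → ZMod 2) {L : List J} {a : J} (ha : a ∉ L) (m : ℕ) :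
    word g x L * g a ^ m =
      (-1 : k) ^ ((L.map fun b => (x b).val).sum * m) • (g a ^ m * word g x L) := by
  induction m with
  | zero => simp
  | succ m ih =>
    rw [pow_succ, ← mul_assoc, ih, smul_mul_assoc, mul_assoc, word_mul_comm (k := k) hg,
      List.count_eq_zero_of_not_mem ha, zero_mul, add_zero, mul_smul_comm, smul_smul, ← pow_add,
      ← mul_assoc, ← pow_succ, mul_add_one]

lemma map_word_mul_of_mem (f : A →ₐ[k] A) (hf : ∀ j, f (g j) = -g j) (z : J → ZMod 2)
    {ℓ : List J} (hℓ : ℓ.Nodup) {a : J} (ha : a ∈ ℓ) :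
    f (word g z ℓ) * g a = (-1 : k) ^ (z a).val • (g a * word g z ℓ) := by
  rw [map_word f hf, smul_mul_assoc, word_mul_comm (k := k) hg, List.count_eq_one_of_mem hℓ ha,
    smul_smul, ← pow_add, one_mul, ← add_assoc, ← two_mul, pow_add, pow_mul, neg_one_sq, one_pow,
    one_mul]

lemma twistedMul_word_mul_word (f : A →ₐ[k] A) (hf : ∀ j, f (g j) = -g j) (i : k)
    (y z : J → ZMod 2) {L ℓ : List J} (hℓ : ℓ.Nodup) {a : J} (haL : a ∉ L) (haℓ : a ∈ ℓ) :
    (i • (LinearMap.mulRight k (g a) ∘ₗ f.toLinearMap)) (word g y L * word g z ℓ) =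
      (i * (-1 : k) ^ (z a).val) • (g a * word g y L * word g z ℓ) := by
  have hcomm := word_mul_comm (k := k) hg y L a
  rw [List.count_eq_zero_of_not_mem haL, zero_mul, add_zero] at hcomm
  simp only [LinearMap.smul_apply, LinearMap.comp_apply, AlgHom.toLinearMap_apply,
    LinearMap.mulRight_apply, map_mul, mul_assoc]
  rw [map_word_mul_of_mem hg f hf z hℓ haℓ, map_word f hf, mul_smul_comm, smul_mul_assoc,
    ← mul_assoc, hcomm]
  simp only [smul_mul_assoc, smul_smul, mul_assoc]
  rw [neg_one_pow_mul_self, mul_one]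

lemma prod_twistedMul_apply_word (f : A →ₐ[k] A) (hf : ∀ j, f (g j) = -g j) (i : k)
    (y z : J → ZMod 2) {L ℓ : List J} (hL : L.Nodup) (hℓ : ℓ.Nodup) (hLℓ : ∀ a ∈ L, a ∈ ℓ) :
    (L.map fun a => (i • (LinearMap.mulRight k (g a) ∘ₗ f.toLinearMap)) ^ (y a).val).prod
        (word g z ℓ) =
      (i ^ (L.map fun a => (y a).val).sum *
        (-1 : k) ^ (L.map fun a => (y a).val * (z a).val).sum) • (word g y L * word g z ℓ) := by
  induction L with
  | nil => simp
  | cons a L ih =>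
    obtain ⟨haL, hL⟩ := List.nodup_cons.mp hL
    rw [List.map_cons, List.prod_cons, Module.End.mul_apply,
      ih hL fun b hb => hLℓ b (List.mem_cons_of_mem a hb), map_smul]
    rcases ZMod.val_two_eq_zero_or_one (y a) with h | h
    · simp [h]
    · rw [h, pow_one, twistedMul_word_mul_word hg f hf i y z hℓ haL (hLℓ a List.mem_cons_self),
        smul_smul]
      simp only [List.map_cons, List.sum_cons, word_cons, h, pow_one, one_mul, mul_assoc, pow_add]
      congr 1
      ring

variable {w : J → k} (hsq : ∀ j, g j * g j = algebraMap k A (w j))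
include hsq

lemma word_mul_word (x y : J → ZMod 2) {L : List J} (hL : L.Nodup) :
    ∃ c : k, ((∀ j, IsUnit (w j)) → IsUnit c) ∧
      word g x L * word g y L = c • word g (x + y) L := by
  induction L with
  | nil => exact ⟨1, fun _ => isUnit_one, by simp⟩
  | cons a L ih =>
    obtain ⟨haL, hL⟩ := List.nodup_cons.mp hL
    obtain ⟨c, hc, hxy⟩ := ih hL
    obtain ⟨u, hu, hpow⟩ := pow_val_mul_pow_val (hsq a) (x a) (y a)
    refine ⟨(-1 : k) ^ ((L.map fun b => (x b).val).sum * (y a).val) * u * c,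
      fun hw => ((isUnit_neg_one.pow _).mul (hu (hw a))).mul (hc hw), ?_⟩
    calc word g x (a :: L) * word g y (a :: L)
        = g a ^ (x a).val * (word g x L * g a ^ (y a).val) * word g y L := by
          simp only [word_cons, mul_assoc]
      _ = (-1 : k) ^ ((L.map fun b => (x b).val).sum * (y a).val) •
            ((g a ^ (x a).val * g a ^ (y a).val) * (word g x L * word g y L)) := by
          rw [word_mul_pow_comm_of_notMem (k := k) hg x haL]
          simp only [mul_smul_comm, smul_mul_assoc, mul_assoc]
      _ = _ := by
          rw [hpow, hxy, smul_mul_smul_comm, smul_smul, word_cons, Pi.add_apply, mul_assoc]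

lemma span_range_word_eq_top (hgen : Algebra.adjoin k (Set.range g) = ⊤) {L : List J}
    (hL : L.Nodup) (hmem : ∀ j, j ∈ L) :
    Submodule.span k (Set.range fun x => word g x L) = ⊤ := by
  set S := Submodule.span k (Set.range fun x => word g x L)
  have hSS : S * S ≤ S := by
    rw [Submodule.span_mul_span, Submodule.span_le]
    rintro _ ⟨_, ⟨x, rfl⟩, _, ⟨y, rfl⟩, rfl⟩
    obtain ⟨c, -, hxy⟩ := word_mul_word hg hsq x y hL
    simp only [hxy]
    exact S.smul_mem c (Submodule.subset_span ⟨_, rfl⟩)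
  have hone : (1 : A) ∈ S := word_zero (g := g) L ▸ Submodule.subset_span ⟨0, rfl⟩
  have hadj : Algebra.adjoin k (Set.range g) ≤
      S.toSubalgebra hone fun a b ha hb => hSS (Submodule.mul_mem_mul ha hb) :=
    Algebra.adjoin_le <| by
      rintro _ ⟨j, rfl⟩
      rw [← word_single (g := g) hL (hmem j)]
      exact Submodule.subset_span ⟨_, rfl⟩
  rw [hgen, top_le_iff] at hadj
  simpa using congrArg Subalgebra.toSubmodule hadj

end Anticommuting

end Words

section Characters

variable {k : Type*} {n : ℕ}

lemma sum_neg_one_pow_mul_val [CommRing k] (c d : ZMod 2) :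
    ∑ t : ZMod 2, (-1 : k) ^ (c.val * t.val) * (-1) ^ (d.val * t.val) =
      if c = d then 2 else 0 := by
  rw [show (Finset.univ : Finset (ZMod 2)) = {0, 1} by decide, Finset.sum_pair zero_ne_one]
  obtain rfl | rfl : c = 0 ∨ c = 1 := by decide +revert
  all_goals obtain rfl | rfl : d = 0 ∨ d = 1 := by decide +revert
  all_goals norm_num [ZMod.val_one]

lemma sum_neg_one_pow_dotp_mul [CommRing k] (y y' : Fin n → ZMod 2) :
    ∑ z : Fin n → ZMod 2, (-1 : k) ^ dotp y z * (-1) ^ dotp y' z =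
      if y = y' then 2 ^ n else 0 := by
  simp only [dotp, ← Finset.prod_pow_eq_pow_sum, ← Finset.prod_mul_distrib]
  rw [← Fintype.prod_sum fun j (t : ZMod 2) =>
    (-1 : k) ^ ((y j).val * t.val) * (-1) ^ ((y' j).val * t.val)]
  simp only [sum_neg_one_pow_mul_val, Finset.prod_ite_zero, Finset.prod_const, Finset.card_univ,
    Fintype.card_fin, funext_iff, Finset.mem_univ, true_implies]

lemma eq_zero_of_forall_sum_mul_neg_one_pow_dotp [CommRing k] [NoZeroDivisors k]
    (hk : (2 : k) ≠ 0) {h : (Fin n → ZMod 2) → k} (hh : ∀ z, ∑ y, h y * (-1) ^ dotp y z = 0) :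
    h = 0 := by
  funext y'
  have hsum : ∑ y, h y * ∑ z : Fin n → ZMod 2, (-1 : k) ^ dotp y z * (-1) ^ dotp y' z = 0 := by
    simp only [Finset.mul_sum, ← mul_assoc]
    rw [Finset.sum_comm]
    simp only [← Finset.sum_mul, hh, zero_mul, Finset.sum_const_zero]
  simpa [sum_neg_one_pow_dotp_mul, pow_ne_zero _ hk] using hsum

lemma linearIndependent_of_apply_basis_eq_dotp_smul [Field k] {W : Type*} [AddCommGroup W]
    [Module k W] (hk : (2 : k) ≠ 0) (b : Module.Basis (Fin n → ZMod 2) k W)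
    {T : (Fin n → ZMod 2) × (Fin n → ZMod 2) → Module.End k W}
    {a d : (Fin n → ZMod 2) → (Fin n → ZMod 2) → k} (ha : ∀ x y, a x y ≠ 0)
    (hd : ∀ x z, d x z ≠ 0)
    (hT : ∀ x y z, T (x, y) (b z) = (a x y * (-1) ^ dotp y z * d (x + y) z) • b (x + y + z)) :
    LinearIndependent k T := by
  rw [Fintype.linearIndependent_iff]
  rintro c hc ⟨x₀, y₀⟩
  set s := x₀ + y₀
  have hcoord : ∀ z, ∑ y, c (s + y, y) * a (s + y) y * (-1) ^ dotp y z * d s z = 0 := by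
    intro z
    have h := congrArg (fun T => b.coord (s + z) (T (b z))) hc
    have hiff : ∀ x y : Fin n → ZMod 2, x + y + z = s + z ↔ x = s + y := fun x y => by
      rw [add_left_inj, ← add_left_inj y, add_assoc, Pi.zmod_two_add_self, add_zero]
    simp only [LinearMap.sum_apply, LinearMap.smul_apply, hT, map_sum, map_smul,
      Module.Basis.coord_apply, Module.Basis.repr_self, Finsupp.single_apply, hiff,
      Fintype.sum_prod_type, smul_eq_mul, mul_ite, mul_one, mul_zero, LinearMap.zero_apply,
      map_zero] at h
    rw [Finset.sum_comm] at h
    simpa [add_assoc, Pi.zmod_two_add_self, mul_assoc] using h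
  have hzero := congrFun (eq_zero_of_forall_sum_mul_neg_one_pow_dotp hk fun z =>
    mul_right_cancel₀ (hd s z) ((Finset.sum_mul ..).trans ((hcoord z).trans (zero_mul _).symm))) y₀
  rw [add_assoc, Pi.zmod_two_add_self, add_zero] at hzero
  exact (mul_eq_zero.mp hzero).resolve_right (ha _ _)

end Characters

section LinearAlgebra

variable {k V W ι : Type*} [Field k] [AddCommGroup V] [Module k V] [AddCommGroup W] [Module k W]

lemma LinearMap.bijective_of_linearIndependent_comp [FiniteDimensional k V]
    [FiniteDimensional k W] [Fintype ι] (f : V →ₗ[k] W)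
    (hdim : Module.finrank k V = Module.finrank k W) {v : ι → V}
    (hv : LinearIndependent k (f ∘ v)) (hcard : Fintype.card ι = Module.finrank k W) :
    Function.Bijective f := by
  have hsurj : Function.Surjective f := by
    rw [← LinearMap.range_eq_top, eq_top_iff, ← hv.span_eq_top_of_card_eq_finrank' hcard,
      Submodule.span_le, Set.range_comp]
    exact Set.image_subset_range f _
  exact ⟨(LinearMap.injective_iff_surjective_of_finrank_eq_finrank hdim).mpr hsurj, hsurj⟩

lemma Submodule.eq_bot_or_eq_top_of_forall_end_mem [Nontrivial W] (U : Submodule k W)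
    (hU : ∀ f : Module.End k W, ∀ c ∈ U, f c ∈ U) : U = ⊥ ∨ U = ⊤ := by
  let U' : Submodule (Module.End k W) W := { U with smul_mem' := fun f c hc => hU f c hc }
  have hU' : U = U'.restrictScalars k := rfl
  rcases IsSimpleOrder.eq_bot_or_eq_top U' with h | h <;> simp [hU', h]

end LinearAlgebra

namespace CliffordAlgebra

section Dimension

variable {k M : Type*} [Field k] [AddCommGroup M] [Module k M] [FiniteDimensional k M]
  [Invertible (2 : k)] (Q : QuadraticForm k M)

lemma finiteDimensional : FiniteDimensional k (CliffordAlgebra Q) :=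
  have : FiniteDimensional k (ExteriorAlgebra k M) :=
    Module.Finite.of_basis (Module.finBasis k M).ExteriorAlgebra
  Module.Finite.equiv (equivExterior Q).symm

lemma finrank_eq_two_pow : Module.finrank k (CliffordAlgebra Q) = 2 ^ Module.finrank k M := by
  rw [(equivExterior Q).finrank_eq,
    Module.finrank_eq_card_basis (Module.finBasis k M).ExteriorAlgebra, Fintype.card_finset,
    Fintype.card_fin]

end Dimension

section SpinorAction

variable {R M : Type*} [CommRing R] [AddCommGroup M] [Module R M] (Q : QuadraticForm R M)

def twistedMul : CliffordAlgebra Q →ₗ[R] Module.End R (CliffordAlgebra Q) :=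
  LinearMap.lcomp R _ (involute : CliffordAlgebra Q →ₐ[R] _).toLinearMap ∘ₗ
    (LinearMap.mul R (CliffordAlgebra Q)).flip

lemma twistedMul_apply (a : CliffordAlgebra Q) :
    twistedMul Q a = LinearMap.mulRight R a ∘ₗ (involute : CliffordAlgebra Q →ₐ[R] _).toLinearMap :=
  rfl

def doubleAction (i : R) : M × M →ₗ[R] Module.End R (CliffordAlgebra Q) :=
  (Algebra.lmul R _).toLinearMap ∘ₗ ι Q ∘ₗ LinearMap.fst R M M +
    i • twistedMul Q ∘ₗ ι Q ∘ₗ LinearMap.snd R M M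

lemma doubleAction_apply (i : R) (m : M × M) (b : CliffordAlgebra Q) :
    doubleAction Q i m b = ι Q m.1 * b + i • (involute b * ι Q m.2) := rfl

variable {i : R} (hi : i * i = -1)
include hi

lemma doubleAction_mul_self (m : M × M) :
    doubleAction Q i m * doubleAction Q i m = algebraMap R _ (Q.prod Q m) := by
  ext b
  simp only [Module.End.mul_apply, doubleAction_apply, map_add, map_mul, map_smul, involute_ι,
    involute_involute, QuadraticMap.prod_apply, LinearMap.add_apply,
    Module.algebraMap_end_apply, neg_mul, mul_neg, smul_add, smul_neg, smul_smul, hi]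
  rw [← mul_assoc, ι_sq_scalar, mul_assoc b, ι_sq_scalar, mul_assoc, ← Algebra.commutes,
    ← Algebra.smul_def, ← Algebra.smul_def, neg_one_smul, neg_neg]
  abel

def spinorAction : CliffordAlgebra (Q.prod Q) →ₐ[R] Module.End R (CliffordAlgebra Q) :=
  lift (Q.prod Q) ⟨doubleAction Q i, doubleAction_mul_self Q hi⟩

lemma spinorAction_ι_inl (m : M) :
    spinorAction Q hi (ι (Q.prod Q) (m, 0)) = Algebra.lmul R _ (ι Q m) := by
  ext b
  simp [spinorAction, doubleAction_apply]

lemma spinorAction_ι_inr (m : M) :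
    spinorAction Q hi (ι (Q.prod Q) (0, m)) = i • twistedMul Q (ι Q m) := by
  ext b
  simp [spinorAction, doubleAction_apply, twistedMul_apply]

end SpinorAction

section Diagonal

variable {k J : Type*} [CommRing k] [Fintype J] [DecidableEq J]

lemma weightedSumSquares_single (w : J → k) (j : J) :
    QuadraticMap.weightedSumSquares k w (Pi.single j 1) = w j := by
  simp [QuadraticMap.weightedSumSquares_apply, Pi.single_apply]

lemma ι_single_mul_self (w : J → k) (j : J) :
    ι (QuadraticMap.weightedSumSquares k w) (Pi.single j 1) *
        ι (QuadraticMap.weightedSumSquares k w) (Pi.single j 1) = algebraMap k _ (w j) := by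
  rw [ι_sq_scalar, weightedSumSquares_single]

lemma ι_single_anticomm (w : J → k) :
    Pairwise fun j l => ι (QuadraticMap.weightedSumSquares k w) (Pi.single j 1) *
        ι (QuadraticMap.weightedSumSquares k w) (Pi.single l 1) =
      -(ι (QuadraticMap.weightedSumSquares k w) (Pi.single l 1) *
        ι (QuadraticMap.weightedSumSquares k w) (Pi.single j 1)) := by
  intro j l hjl
  refine ι_mul_ι_comm_of_isOrtho ?_
  simp [QuadraticMap.IsOrtho, QuadraticMap.weightedSumSquares_apply, Pi.single_apply,
    Finset.sum_add_distrib, mul_add, hjl, hjl.symm]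

lemma adjoin_range_ι_single (Q : QuadraticForm k (J → k)) :
    Algebra.adjoin k (Set.range fun j => ι Q (Pi.single j 1)) = ⊤ := by
  set S := Algebra.adjoin k (Set.range fun j => ι Q (Pi.single j 1))
  have hspan : Submodule.span k (Set.range (Pi.basisFun k J)) ≤
      (Subalgebra.toSubmodule S).comap (ι Q) :=
    Submodule.span_le.mpr <| by
      rintro _ ⟨j, rfl⟩
      exact Algebra.subset_adjoin ⟨j, by simp⟩
  rw [(Pi.basisFun k J).span_eq, top_le_iff] at hspan
  rw [eq_top_iff, ← adjoin_range_ι, Algebra.adjoin_le_iff]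
  rintro _ ⟨v, rfl⟩
  exact (Submodule.eq_top_iff'.mp hspan) v

def weightedSumSquaresSumIsometry {J₁ J₂ : Type*} [Fintype J₁] [Fintype J₂] (w₁ : J₁ → k)
    (w₂ : J₂ → k) :
    (QuadraticMap.weightedSumSquares k (Sum.elim w₁ w₂)).IsometryEquiv
      ((QuadraticMap.weightedSumSquares k w₁).prod (QuadraticMap.weightedSumSquares k w₂)) where
  toLinearEquiv := LinearEquiv.sumArrowLequivProdArrow J₁ J₂ k k
  map_app' v := by
    simp [QuadraticMap.weightedSumSquares_apply, Fintype.sum_sum_type]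

end Diagonal

end CliffordAlgebra

section DoubleClifford

variable {k : Type*} [Field k] {n : ℕ} (q : Fin n → k)

noncomputable def gen (j : Fin n) : CliffordAlgebra (QF q) := ι (QF q) (Pi.single j 1)

lemma eB_eq_word (x : Fin n → ZMod 2) : eB q x = word (gen q) x (List.finRange n) := rfl

lemma gen_mul_self (j : Fin n) : gen q j * gen q j = algebraMap k _ (q j) :=
  ι_single_mul_self q j

lemma gen_anticomm : Pairwise fun j l => gen q j * gen q l = -(gen q l * gen q j) :=
  ι_single_anticomm q

lemma span_range_eB : Submodule.span k (Set.range (eB q)) = ⊤ :=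
  span_range_word_eq_top (gen_anticomm q) (gen_mul_self q) (adjoin_range_ι_single _)
    (List.nodup_finRange n) List.mem_finRange

lemma exists_eB_mul_eB (hq : ∀ j, q j ≠ 0) :
    ∃ d : (Fin n → ZMod 2) → (Fin n → ZMod 2) → k,
      (∀ x y, d x y ≠ 0) ∧ ∀ x y, eB q x * eB q y = d x y • eB q (x + y) := by
  choose d hd hmul using fun x y =>
    word_mul_word (gen_anticomm q) (gen_mul_self q) x y (List.nodup_finRange n)
  exact ⟨d, fun x y => (hd x y fun j => (hq j).isUnit).ne_zero, hmul⟩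

variable [Invertible (2 : k)]

noncomputable def eBasis : Module.Basis (Fin n → ZMod 2) k (CliffordAlgebra (QF q)) :=
  .mk (linearIndependent_of_top_le_span_of_card_eq_finrank (span_range_eB q).ge <| by
      rw [finrank_eq_two_pow, Module.finrank_fin_fun, Fintype.card_fun, ZMod.card,
        Fintype.card_fin])
    (span_range_eB q).ge

lemma eBasis_apply (x : Fin n → ZMod 2) : eBasis q x = eB q x := Module.Basis.mk_apply ..

omit [Invertible (2 : k)]

def qf2IsometryEquivProd : (QF2 q).IsometryEquiv ((QF q).prod (QF q)) :=
  weightedSumSquaresSumIsometry q q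

lemma qf2IsometryEquivProd_apply (v : Fin n ⊕ Fin n → k) :
    (qf2IsometryEquivProd q).toIsometry v = (fun j => v (Sum.inl j), fun j => v (Sum.inr j)) :=
  rfl

variable {i : k} (hi : i * i = -1)

noncomputable def doubleCliffordAction :
    CliffordAlgebra (QF2 q) →ₐ[k] Module.End k (CliffordAlgebra (QF q)) :=
  (spinorAction (QF q) hi).comp (equivOfIsometry (qf2IsometryEquivProd q)).toAlgHom

lemma doubleCliffordAction_ι_inl (j : Fin n) :
    doubleCliffordAction q hi (ι (QF2 q) (Pi.single (Sum.inl j) 1)) =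
      Algebra.lmul k _ (gen q j) := by
  rw [gen, ← spinorAction_ι_inl (QF q) hi, doubleCliffordAction, AlgHom.comp_apply,
    AlgEquiv.coe_toAlgHom, equivOfIsometry_apply, map_apply_ι, qf2IsometryEquivProd_apply]
  congr 2
  ext l <;> simp [Pi.single_apply]

lemma doubleCliffordAction_ι_inr (j : Fin n) :
    doubleCliffordAction q hi (ι (QF2 q) (Pi.single (Sum.inr j) 1)) =
      i • (LinearMap.mulRight k (gen q j) ∘ₗ
        (involute : CliffordAlgebra (QF q) →ₐ[k] _).toLinearMap) := by
  rw [← twistedMul_apply, gen, ← spinorAction_ι_inr (QF q) hi, doubleCliffordAction,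
    AlgHom.comp_apply, AlgEquiv.coe_toAlgHom, equivOfIsometry_apply, map_apply_ι,
    qf2IsometryEquivProd_apply]
  congr 2
  ext l <;> simp [Pi.single_apply]

lemma doubleCliffordAction_eB2_apply (x y z : Fin n → ZMod 2) :
    doubleCliffordAction q hi (eB2 q x y) (eB q z) =
      (i ^ rho y * (-1 : k) ^ dotp y z) • (eB q x * eB q y * eB q z) := by
  have hleft : (doubleCliffordAction q hi) ((List.finRange n).map fun j =>
      ι (QF2 q) (Pi.single (Sum.inl j) 1) ^ (x j).val).prod = Algebra.lmul k _ (eB q x) := by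
    simp only [map_list_prod, List.map_map, Function.comp_def, map_pow,
      doubleCliffordAction_ι_inl, eB_eq_word, word]
  have hright := prod_twistedMul_apply_word (gen_anticomm q) involute (fun j => involute_ι _) i
    y z (List.nodup_finRange n) (List.nodup_finRange n) fun a _ => List.mem_finRange a
  rw [eB2, map_mul, Module.End.mul_apply, hleft, map_list_prod, List.map_map]
  simp only [Function.comp_def, map_pow, doubleCliffordAction_ι_inr]
  rw [eB_eq_word q z, hright, map_smul, Algebra.coe_lmul_eq_mul, ← eB_eq_word, ← eB_eq_word, rho,
    dotp, Fin.sum_univ_def, Fin.sum_univ_def, mul_assoc, LinearMap.mul_apply']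

lemma linearIndependent_doubleCliffordAction_eB2 [Invertible (2 : k)] (hq : ∀ j, q j ≠ 0) :
    LinearIndependent k fun p : (Fin n → ZMod 2) × (Fin n → ZMod 2) =>
      doubleCliffordAction q hi (eB2 q p.1 p.2) := by
  obtain ⟨d, hd, hmul⟩ := exists_eB_mul_eB q hq
  have hi0 : i ≠ 0 := by rintro rfl; simp at hi
  refine linearIndependent_of_apply_basis_eq_dotp_smul (Invertible.ne_zero 2) (eBasis q)
    (a := fun x y => i ^ rho y * d x y) (fun x y => mul_ne_zero (pow_ne_zero _ hi0) (hd x y)) hd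
    fun x y z => ?_
  rw [eBasis_apply, eBasis_apply, doubleCliffordAction_eB2_apply, hmul, smul_mul_assoc, hmul,
    smul_smul, smul_smul]
  congr 1
  ring

end DoubleClifford

/-- if `√(-1) ∈ k` then there is an algebra isomorphism
`C(V⊕V, q⊕q) ≅ End_k(C(V,q))`, under which `e_x ⊗ e_y` acts on `e_z` by
`(e_x ⊗ e_y)·e_z = i^{ρ(y)} (-1)^{y·z} e_x e_y e_z`; in particular the action is
faithful and irreducible, realizing `C(V,q)` as the spinor representation. -/
theorem clifford_double_iso_end {k : Type*} [Field k] (hk : (2 : k) ≠ 0)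
    (i : k) (hi : i * i = -1)
    {n : ℕ} (q : Fin n → k) (hq : ∀ j, q j ≠ 0) :
    ∃ Φ : CliffordAlgebra (QF2 q) ≃ₐ[k] Module.End k (CliffordAlgebra (QF q)),
      (∀ x y z : Fin n → ZMod 2,
        Φ (eB2 q x y) (eB q z) =
          (i ^ rho y * (-1 : k) ^ dotp y z) • (eB q x * eB q y * eB q z)) ∧
      (∀ U : Submodule k (CliffordAlgebra (QF q)),
        (∀ (a : CliffordAlgebra (QF2 q)), ∀ c ∈ U, Φ a c ∈ U) → U = ⊥ ∨ U = ⊤) := by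
  let : Invertible (2 : k) := invertibleOfNonzero hk
  have : FiniteDimensional k (CliffordAlgebra (QF q)) := finiteDimensional _
  have : FiniteDimensional k (CliffordAlgebra (QF2 q)) := finiteDimensional _
  have hdim : Module.finrank k (CliffordAlgebra (QF q)) = 2 ^ n := by
    rw [finrank_eq_two_pow, Module.finrank_fin_fun]
  have hbij : Function.Bijective (doubleCliffordAction q hi) :=
    (doubleCliffordAction q hi).toLinearMap.bijective_of_linearIndependent_comp
      (by rw [Module.finrank_linearMap, hdim, finrank_eq_two_pow,
        Module.finrank_fintype_fun_eq_card, Fintype.card_sum, Fintype.card_fin, pow_add])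
      (linearIndependent_doubleCliffordAction_eB2 q hi hq)
      (by rw [Module.finrank_linearMap, hdim, Fintype.card_prod, Fintype.card_fun, ZMod.card,
        Fintype.card_fin])
  have : Nontrivial (CliffordAlgebra (QF q)) :=
    Module.nontrivial_of_finrank_pos (hdim ▸ Nat.two_pow_pos n)
  refine ⟨AlgEquiv.ofBijective _ hbij, doubleCliffordAction_eB2_apply q hi, fun U hU =>
    U.eq_bot_or_eq_top_of_forall_end_mem fun f c hc => ?_⟩
  obtain ⟨a, rfl⟩ := hbij.2 f
  exact hU a c hc
end

section
/- Let A be an associative algebra over k, σ an involutive automorphism, q ∈ k^×, and Ā the Clifford process algebra (Ā = A ⊕ Av, v² = q, va = σ(a)v). If W is an irreducible A-module not isomorphic to its twist W_σ (where a acts by σ(a)), then W ⊕ W_σ, with v acting by v·(w,w') = (q w', w), is an irreducible Ā-module. -/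
/-- let `A` be an associative unital `k`-algebra, `σ` an involutive
automorphism, `q ∈ k^×`, and `Ā = A ⊕ Av` the Clifford process algebra (`v² = q`,
`va = σ(a)v`).  If `W` is an irreducible `A`-module (given by `ρ : A →ₐ End_k W`)
not isomorphic to its twist `W_σ` (on which `a` acts by `ρ(σ a)`), then `W ⊕ W_σ`,
with `a` acting by `(w,w') ↦ (ρ(a)w, ρ(σ a)w')` and `v` acting by
`(w,w') ↦ (q·w', w)`, is an irreducible `Ā`-module. -/
theorem clifford_process_irreducible_module
    {k A W : Type*} [Field k] (hk : (2 : k) ≠ 0)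
    [Ring A] [Algebra k A] [AddCommGroup W] [Module k W]
    (ρ : A →ₐ[k] Module.End k W) (σ : A ≃ₐ[k] A) (hσ : ∀ a, σ (σ a) = a)
    (q : k) (hq : q ≠ 0)
    [Nontrivial W]
    (hirr : ∀ U : Submodule k W, (∀ a : A, ∀ w ∈ U, ρ a w ∈ U) → U = ⊥ ∨ U = ⊤)
    (hniso : ¬ ∃ φ : W ≃ₗ[k] W, ∀ (a : A) (w : W), φ (ρ a w) = ρ (σ a) (φ w)) :
    ∀ U : Submodule k (W × W),
      (∀ a : A, ∀ p ∈ U, ((ρ a p.1, ρ (σ a) p.2) : W × W) ∈ U) →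
      (∀ p ∈ U, ((q • p.2, p.1) : W × W) ∈ U) →
      U = ⊥ ∨ U = ⊤ := by
  intro U hA hv
  by_cases hUbot : U = ⊥
  · exact Or.inl hUbot
  right
  -- If every (w,0) lies in U, then U = ⊤ (use v to get (0,w)).
  have htop : (∀ w : W, ((w, (0:W)) : W × W) ∈ U) → U = ⊤ := by
    intro h
    rw [Submodule.eq_top_iff']
    intro p
    have h1 : ((p.1, (0:W)) : W × W) ∈ U := h p.1
    have h2 : (((0:W), p.2) : W × W) ∈ U := by
      have := hv (p.2, 0) (h p.2)
      simpa using this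
    have := U.add_mem h1 h2
    simpa using this
  -- K1 = {w | (w,0) ∈ U}
  have hK1inv : ∀ a : A, ∀ w ∈ U.comap (LinearMap.inl k W W),
      ρ a w ∈ U.comap (LinearMap.inl k W W) := by
    intro a w hw
    simp only [Submodule.mem_comap, LinearMap.inl_apply] at hw ⊢
    have := hA a (w, 0) hw
    simpa using this
  have hK2inv : ∀ a : A, ∀ w ∈ U.comap (LinearMap.inr k W W),
      ρ a w ∈ U.comap (LinearMap.inr k W W) := by
    intro a w hw
    simp only [Submodule.mem_comap, LinearMap.inr_apply] at hw ⊢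
    have := hA (σ a) (0, w) hw
    simpa [hσ] using this
  rcases hirr _ hK1inv with hb1 | hb1
  swap
  · -- K1 = ⊤ : every (w,0) ∈ U
    apply htop
    intro w
    have : w ∈ U.comap (LinearMap.inl k W W) := hb1 ▸ Submodule.mem_top
    simpa using this
  rcases hirr _ hK2inv with hb2 | hb2
  swap
  · -- K2 = ⊤ : every (0,w) ∈ U, use v and q ≠ 0
    apply htop
    intro w
    have h0 : (((0:W), w) : W × W) ∈ U := by
      have : w ∈ U.comap (LinearMap.inr k W W) := hb2 ▸ Submodule.mem_top
      simpa using this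
    have h1 : ((q • w, (0:W)) : W × W) ∈ U := by
      have := hv (0, w) h0
      simpa using this
    have := U.smul_mem q⁻¹ h1
    simpa [Prod.smul_mk, smul_smul, inv_mul_cancel₀ hq] using this
  -- both K1, K2 are ⊥ : U is the graph of an intertwiner, contradiction.
  exfalso
  have hK1 : ∀ w : W, ((w, (0:W)) : W × W) ∈ U → w = 0 := by
    intro w hw
    have : w ∈ U.comap (LinearMap.inl k W W) := by simpa using hw
    rw [hb1] at this
    simpa using this
  have hK2 : ∀ w : W, (((0:W), w) : W × W) ∈ U → w = 0 := by
    intro w hw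
    have : w ∈ U.comap (LinearMap.inr k W W) := by simpa using hw
    rw [hb2] at this
    simpa using this
  obtain ⟨p0, hp0, hp0ne⟩ := Submodule.ne_bot_iff U |>.mp hUbot
  -- projections of U are all of W
  have hP1inv : ∀ a : A, ∀ w ∈ U.map (LinearMap.fst k W W),
      ρ a w ∈ U.map (LinearMap.fst k W W) := by
    rintro a w ⟨p, hp, rfl⟩
    exact ⟨_, hA a p hp, rfl⟩
  have hP2inv : ∀ a : A, ∀ w ∈ U.map (LinearMap.snd k W W),
      ρ a w ∈ U.map (LinearMap.snd k W W) := by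
    rintro a w ⟨p, hp, rfl⟩
    refine ⟨_, hA (σ a) p hp, ?_⟩
    simp [hσ]
  have hP1 : U.map (LinearMap.fst k W W) = ⊤ := by
    rcases hirr (U.map (LinearMap.fst k W W)) hP1inv with h | h
    · exfalso
      have hp1 : p0.1 ∈ U.map (LinearMap.fst k W W) :=
        Submodule.mem_map_of_mem hp0
      rw [h] at hp1
      have hp11 : p0.1 = 0 := by simpa using hp1
      have hp12 : p0.2 = 0 := by
        apply hK2
        have : p0 = ((0:W), p0.2) := by
          ext <;> simp [hp11]
        rwa [← this]
      exact hp0ne (by ext <;> simp [hp11, hp12])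
    · exact h
  have hP2 : U.map (LinearMap.snd k W W) = ⊤ := by
    rcases hirr (U.map (LinearMap.snd k W W)) hP2inv with h | h
    · exfalso
      have hp2 : p0.2 ∈ U.map (LinearMap.snd k W W) :=
        Submodule.mem_map_of_mem hp0
      rw [h] at hp2
      have hp22 : p0.2 = 0 := by simpa using hp2
      have hp21 : p0.1 = 0 := by
        apply hK1
        have : p0 = (p0.1, (0:W)) := by
          ext <;> simp [hp22]
        rwa [← this]
      exact hp0ne (by ext <;> simp [hp21, hp22])
    · exact h
  -- f, g : U → W the two coordinate maps
  set f : U →ₗ[k] W := (LinearMap.fst k W W).comp U.subtype with hf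
  set g : U →ₗ[k] W := (LinearMap.snd k W W).comp U.subtype with hg
  have hfinj : Function.Injective f := by
    intro u u' huu
    have h1 : (u : W × W).1 = (u' : W × W).1 := huu
    have h2 : (u : W × W).2 - (u' : W × W).2 = 0 := by
      apply hK2
      have hsub : ((u : W × W) - (u' : W × W)) ∈ U := U.sub_mem u.2 u'.2
      have : ((u : W × W) - (u' : W × W)) =
          (((0:W), (u : W × W).2 - (u' : W × W).2) : W × W) := by
        ext
        · simpa using sub_eq_zero_of_eq h1
        · rfl
      rwa [this] at hsub
    have h2' : (u : W × W).2 = (u' : W × W).2 := by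
      rwa [sub_eq_zero] at h2
    exact Subtype.ext (Prod.ext h1 h2')
  have hginj : Function.Injective g := by
    intro u u' huu
    have h2 : (u : W × W).2 = (u' : W × W).2 := huu
    have h1 : (u : W × W).1 - (u' : W × W).1 = 0 := by
      apply hK1
      have hsub : ((u : W × W) - (u' : W × W)) ∈ U := U.sub_mem u.2 u'.2
      have : ((u : W × W) - (u' : W × W)) =
          (((u : W × W).1 - (u' : W × W).1, (0:W)) : W × W) := by
        ext
        · rfl
        · simpa using sub_eq_zero_of_eq h2
      rwa [this] at hsub
    have h1' : (u : W × W).1 = (u' : W × W).1 := by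
      rwa [sub_eq_zero] at h1
    exact Subtype.ext (Prod.ext h1' h2)
  have hfsurj : Function.Surjective f := by
    intro w
    have : w ∈ U.map (LinearMap.fst k W W) := hP1 ▸ Submodule.mem_top
    obtain ⟨p, hp, hpe⟩ := this
    exact ⟨⟨p, hp⟩, hpe⟩
  have hgsurj : Function.Surjective g := by
    intro w
    have : w ∈ U.map (LinearMap.snd k W W) := hP2 ▸ Submodule.mem_top
    obtain ⟨p, hp, hpe⟩ := this
    exact ⟨⟨p, hp⟩, hpe⟩
  set e1 : U ≃ₗ[k] W := LinearEquiv.ofBijective f ⟨hfinj, hfsurj⟩ with he1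
  set e2 : U ≃ₗ[k] W := LinearEquiv.ofBijective g ⟨hginj, hgsurj⟩ with he2
  set φ : W ≃ₗ[k] W := e1.symm.trans e2 with hφ
  have key : ∀ p : W × W, p ∈ U → φ p.1 = p.2 := by
    intro p hp
    have h1 : e1 ⟨p, hp⟩ = p.1 := rfl
    have h2 : e1.symm p.1 = ⟨p, hp⟩ := by
      rw [← h1]; exact e1.symm_apply_apply _
    show e2 (e1.symm p.1) = p.2
    rw [h2]
    rfl
  have hgraph : ∀ w : W, ((w, φ w) : W × W) ∈ U := by
    intro w
    have h1 : e1 (e1.symm w) = w := e1.apply_symm_apply w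
    have h2 : (((e1.symm w : U) : W × W)) ∈ U := (e1.symm w).2
    have h3 : ((e1.symm w : U) : W × W).1 = w := h1
    have h4 : φ w = ((e1.symm w : U) : W × W).2 := rfl
    have : ((w, φ w) : W × W) = ((e1.symm w : U) : W × W) := by
      ext
      · simp [h3]
      · simp [h4]
    rw [this]
    exact h2
  refine hniso ⟨φ, ?_⟩
  intro a w
  have hmem : ((ρ a w, ρ (σ a) (φ w)) : W × W) ∈ U := hA a (w, φ w) (hgraph w)
  exact key _ hmem
end
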